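/- arXiv:1403.5422 — 17 statements merged into one kernel-verified Lean document; each statement's English description precedes it below -/
import Mathlib

section
/- Every Stein AG-groupoid is right alternative, i.e., for all a,b in S, (a·b)·b = a·(b·b). -/
/-- Every Stein AG-groupoid is right alternative. -/
theorem stein_right_alternative {S : Type*} (mul : S → S → S)
    (left_invertive : ∀ a b c : S, mul (mul a b) c = mul (mul c b) a)
    (stein : ∀ a b c : S, mul a (mul b c) = mul (mul b c) a) :
    ∀ a b : S, mul (mul a b) b = mul a (mul b b) := by
  intro a b
  calc mul (mul a b) b = mul (mul b b) a := left_invertive a b b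
    _ = mul a (mul b b) := (stein a b b).symm
end

section
/- Every Stein AG-groupoid is an AG**-groupoid, i.e., for all a,b,c in S, a·(b·c) = b·(a·c). -/
/-- Every Stein AG-groupoid is an AG**-groupoid. -/
theorem stein_is_AGstarstar {S : Type*} (mul : S → S → S)
    (left_invertive : ∀ a b c : S, mul (mul a b) c = mul (mul c b) a)
    (stein : ∀ a b c : S, mul a (mul b c) = mul (mul b c) a) :
    ∀ a b c : S, mul a (mul b c) = mul b (mul a c) := by
  intro a b c
  calc mul a (mul b c) = mul (mul b c) a := stein a b c
    _ = mul (mul a c) b := left_invertive b c a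
    _ = mul b (mul a c) := (stein b a c).symm
end

section
/- Every Stein AG-groupoid is a Bol*-AG-groupoid, i.e., for all a,b,c,d in S, a·((b·c)·d) = ((a·b)·c)·d. -/
/-- Every Stein AG-groupoid is a Bol*-AG-groupoid. -/
theorem stein_is_bolstar {S : Type*} (mul : S → S → S)
    (left_invertive : ∀ a b c : S, mul (mul a b) c = mul (mul c b) a)
    (stein : ∀ a b c : S, mul a (mul b c) = mul (mul b c) a) :
    ∀ a b c d : S, mul a (mul (mul b c) d) = mul (mul (mul a b) c) d := by
  intro a b c d
  calc mul a (mul (mul b c) d)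
      = mul (mul (mul b c) d) a := stein a _ d
    _ = mul (mul (mul d c) b) a := by rw [left_invertive b c d]
    _ = mul (mul a b) (mul d c) := (left_invertive a b _).symm
    _ = mul (mul d c) (mul a b) := stein _ d c
    _ = mul (mul (mul a b) c) d := (left_invertive _ c d).symm
end

section
/- Every Stein AG-groupoid is paramedial, i.e., for all a,b,c,d in S, (a·b)·(c·d) = (d·b)·(c·a). -/
/-- Every Stein AG-groupoid is paramedial. -/
theorem stein_paramedial {S : Type*} (mul : S → S → S)
    (left_invertive : ∀ a b c : S, mul (mul a b) c = mul (mul c b) a)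
    (stein : ∀ a b c : S, mul a (mul b c) = mul (mul b c) a) :
    ∀ a b c d : S, mul (mul a b) (mul c d) = mul (mul d b) (mul c a) := by
  intro a b c d
  calc mul (mul a b) (mul c d)
      = mul (mul c d) (mul a b) := stein _ c d
    _ = mul (mul (mul a b) d) c := left_invertive _ _ _
    _ = mul (mul (mul d b) a) c := congrArg (mul · c) (left_invertive a b d)
    _ = mul (mul c a) (mul d b) := left_invertive _ _ _
    _ = mul (mul d b) (mul c a) := stein _ d b
end

section
/- Every Stein AG-groupoid is a left nuclear square AG-groupoid, i.e., for all a,b,c in S, ((a·a)·b)·c = (a·a)·(b·c). -/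
theorem mul_mul_mul_comm_of_left_invertive {S : Type*} (mul : S → S → S)
    (left_invertive : ∀ a b c : S, mul (mul a b) c = mul (mul c b) a) (a b c d : S) :
    mul (mul a b) (mul c d) = mul (mul a c) (mul b d) :=
  calc mul (mul a b) (mul c d)
      = mul (mul (mul c d) b) a := left_invertive _ _ _
    _ = mul (mul (mul b d) c) a := by rw [left_invertive c d b]
    _ = mul (mul a c) (mul b d) := left_invertive _ _ _

/-- Every Stein AG-groupoid is a left nuclear square AG-groupoid. -/
theorem stein_left_nuclear_square {S : Type*} (mul : S → S → S)
    (left_invertive : ∀ a b c : S, mul (mul a b) c = mul (mul c b) a)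
    (stein : ∀ a b c : S, mul a (mul b c) = mul (mul b c) a) :
    ∀ a b c : S, mul (mul (mul a a) b) c = mul (mul a a) (mul b c) := by
  have medial := mul_mul_mul_comm_of_left_invertive mul left_invertive
  intro a b c
  calc mul (mul (mul a a) b) c
      = mul (mul c b) (mul a a) := left_invertive _ _ _
    _ = mul (mul a a) (mul c b) := (stein _ _ _).symm
    _ = mul (mul a c) (mul a b) := medial _ _ _ _
    _ = mul (mul a b) (mul a c) := (stein _ _ _).symm
    _ = mul (mul a a) (mul b c) := medial _ _ _ _
end

section
/- Every Stein AG-groupoid is a right nuclear square AG-groupoid, i.e., for all a,b,c in S, (a·b)·(c·c) = a·(b·(c·c)). -/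
theorem stein_assoc_of_product_right {S : Type*} (mul : S → S → S)
    (left_invertive : ∀ a b c : S, mul (mul a b) c = mul (mul c b) a)
    (stein : ∀ a b c : S, mul a (mul b c) = mul (mul b c) a) (a b c d : S) :
    mul (mul a b) (mul c d) = mul a (mul b (mul c d)) :=
  calc mul (mul a b) (mul c d) = mul (mul (mul c d) b) a := left_invertive a b (mul c d)
    _ = mul a (mul (mul c d) b) := (stein a (mul c d) b).symm
    _ = mul a (mul b (mul c d)) := by rw [stein b c d]

/-- Every Stein AG-groupoid is a right nuclear square AG-groupoid. -/
theorem stein_right_nuclear_square {S : Type*} (mul : S → S → S)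
    (left_invertive : ∀ a b c : S, mul (mul a b) c = mul (mul c b) a)
    (stein : ∀ a b c : S, mul a (mul b c) = mul (mul b c) a) :
    ∀ a b c : S, mul (mul a b) (mul c c) = mul a (mul b (mul c c)) :=
  fun a b c => stein_assoc_of_product_right mul left_invertive stein a b c c
end

section
/- Every Stein AG-groupoid is a middle nuclear square AG-groupoid, i.e., for all a,b,c in S, (a·(b·b))·c = a·((b·b)·c). -/
/- In a Stein AG-groupoid every product `u·v` commutes with everything, so in `(x·y)·(u·v)` the
factor `y` can be exchanged with `u·v`; the theorem is this exchange after moving `a` across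
`(b·b)·c` by the Stein law and the left invertive law. -/

theorem mul_mul_swap_right_of_stein {S : Type*} (mul : S → S → S)
    (left_invertive : ∀ a b c : S, mul (mul a b) c = mul (mul c b) a)
    (stein : ∀ a b c : S, mul a (mul b c) = mul (mul b c) a) (x y u v : S) :
    mul (mul x y) (mul u v) = mul (mul x (mul u v)) y := by
  rw [left_invertive x y (mul u v), ← stein y u v, left_invertive y (mul u v) x]

/-- Every Stein AG-groupoid is a middle nuclear square AG-groupoid. -/
theorem stein_middle_nuclear_square {S : Type*} (mul : S → S → S)
    (left_invertive : ∀ a b c : S, mul (mul a b) c = mul (mul c b) a)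
    (stein : ∀ a b c : S, mul a (mul b c) = mul (mul b c) a) :
    ∀ a b c : S, mul (mul a (mul b b)) c = mul a (mul (mul b b) c) := by
  intro a b c
  calc mul (mul a (mul b b)) c
      = mul (mul a c) (mul b b) :=
        (mul_mul_swap_right_of_stein mul left_invertive stein a c b b).symm
    _ = mul (mul (mul b b) c) a := left_invertive _ _ _
    _ = mul a (mul (mul b b) c) := (stein _ _ _).symm
end

section
/- Every AG**-groupoid is a Bol*-AG-groupoid, i.e., if a set S with binary operation · satisfies the left invertive law and a·(b·c) = b·(a·c) for all a,b,c in S, then a·((b·c)·d) = ((a·b)·c)·d for all a,b,c,d in S. -/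
/-- Every AG**-groupoid is a Bol*-AG-groupoid. -/
theorem AGstarstar_is_bolstar {S : Type*} (mul : S → S → S)
    (left_invertive : ∀ a b c : S, mul (mul a b) c = mul (mul c b) a)
    (agss : ∀ a b c : S, mul a (mul b c) = mul b (mul a c)) :
    ∀ a b c d : S, mul a (mul (mul b c) d) = mul (mul (mul a b) c) d := by
  intro a b c d
  calc mul a (mul (mul b c) d)
      = mul a (mul (mul d c) b) := by rw [left_invertive b c d]
    _ = mul (mul d c) (mul a b) := agss a (mul d c) b
    _ = mul (mul (mul a b) c) d := (left_invertive (mul a b) c d).symm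
end

section
/- Every Bol*-AG-groupoid is paramedial, i.e., if a set S with binary operation · satisfies the left invertive law and a·((b·c)·d) = ((a·b)·c)·d for all a,b,c,d in S, then (a·b)·(c·d) = (d·b)·(c·a) for all a,b,c,d in S. -/
/-! Using left invertivity twice and then Bol*, `(a·b)·(c·d) = b·((d·c)·a)`. The right-hand
side of paramediality rewrites the same way to `b·((a·c)·d)`, and `(d·c)·a = (a·c)·d` is
left invertivity. -/

theorem mul_mul_mul_eq_mul_mul_mul_of_bolstar {S : Type*} (mul : S → S → S)
    (left_invertive : ∀ a b c : S, mul (mul a b) c = mul (mul c b) a)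
    (bolstar : ∀ a b c d : S, mul a (mul (mul b c) d) = mul (mul (mul a b) c) d)
    (a b c d : S) :
    mul (mul a b) (mul c d) = mul b (mul (mul d c) a) := by
  rw [left_invertive a b (mul c d), left_invertive c d b, ← bolstar]

/-- Every Bol*-AG-groupoid is paramedial. -/
theorem bolstar_paramedial {S : Type*} (mul : S → S → S)
    (left_invertive : ∀ a b c : S, mul (mul a b) c = mul (mul c b) a)
    (bolstar : ∀ a b c d : S, mul a (mul (mul b c) d) = mul (mul (mul a b) c) d) :
    ∀ a b c d : S, mul (mul a b) (mul c d) = mul (mul d b) (mul c a) := by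
  intro a b c d
  rw [mul_mul_mul_eq_mul_mul_mul_of_bolstar mul left_invertive bolstar,
    mul_mul_mul_eq_mul_mul_mul_of_bolstar mul left_invertive bolstar, left_invertive d c a]
end

section
/- Every AG**-groupoid is a left nuclear square AG-groupoid, i.e., if a set S with binary operation · satisfies the left invertive law and a·(b·c) = b·(a·c) for all a,b,c in S, then ((a·a)·b)·c = (a·a)·(b·c) for all a,b,c in S. -/
/-! Every AG-groupoid is medial, `(x·y)·(z·w) = (x·z)·(y·w)`. Using the left invertive law and the
AG** law to move the factors of `a·a` around, `((a·a)·b)·c` becomes `(a·b)·(a·c)`, which mediality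
turns into `(a·a)·(b·c)`. -/

theorem medial_of_left_invertive {S : Type*} (mul : S → S → S)
    (left_invertive : ∀ a b c : S, mul (mul a b) c = mul (mul c b) a) (x y z w : S) :
    mul (mul x y) (mul z w) = mul (mul x z) (mul y w) :=
  calc mul (mul x y) (mul z w) = mul (mul (mul z w) y) x := left_invertive x y (mul z w)
    _ = mul (mul (mul y w) z) x := by rw [left_invertive z w y]
    _ = mul (mul x z) (mul y w) := left_invertive (mul y w) z x

/-- Every AG**-groupoid is a left nuclear square AG-groupoid. -/
theorem AGstarstar_left_nuclear_square {S : Type*} (mul : S → S → S)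
    (left_invertive : ∀ a b c : S, mul (mul a b) c = mul (mul c b) a)
    (agss : ∀ a b c : S, mul a (mul b c) = mul b (mul a c)) :
    ∀ a b c : S, mul (mul (mul a a) b) c = mul (mul a a) (mul b c) := by
  intro a b c
  calc mul (mul (mul a a) b) c = mul (mul c b) (mul a a) := left_invertive (mul a a) b c
    _ = mul a (mul (mul c b) a) := agss (mul c b) a a
    _ = mul a (mul (mul a b) c) := by rw [left_invertive c b a]
    _ = mul (mul a b) (mul a c) := agss a (mul a b) c
    _ = mul (mul a a) (mul b c) := medial_of_left_invertive mul left_invertive a b a c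
end

section
/- If a Stein AG-groupoid S is also an AG*-groupoid, i.e., (a·b)·c = b·(a·c) for all a,b,c in S, then S is a semigroup: the operation · is associative. -/
/-- A Stein AG-groupoid that is also an AG*-groupoid is a semigroup. -/
theorem stein_AGstar_is_semigroup {S : Type*} (mul : S → S → S)
    (left_invertive : ∀ a b c : S, mul (mul a b) c = mul (mul c b) a)
    (stein : ∀ a b c : S, mul a (mul b c) = mul (mul b c) a)
    (agstar : ∀ a b c : S, mul (mul a b) c = mul b (mul a c)) :
    ∀ a b c : S, mul (mul a b) c = mul a (mul b c) := by
  intro a b c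
  calc mul (mul a b) c
      = mul b (mul a c) := agstar a b c
    _ = mul (mul a c) b := stein b a c
    _ = mul (mul b c) a := left_invertive a c b
    _ = mul a (mul b c) := (stein a b c).symm
end

section
/- If a Stein AG-groupoid S is an AG-3-band, i.e., a·(a·a) = a for all a in S, then S is a semigroup: the operation · is associative. -/
theorem mul_comm_of_stein_of_forall_exists_mul_eq {S : Type*} (mul : S → S → S)
    (stein : ∀ a b c : S, mul a (mul b c) = mul (mul b c) a)
    (exists_mul_eq : ∀ c : S, ∃ a b : S, mul a b = c) :
    ∀ x y : S, mul x y = mul y x := by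
  intro x y
  obtain ⟨a, b, rfl⟩ := exists_mul_eq y
  exact stein x a b

theorem assoc_of_left_invertive_of_comm {S : Type*} (mul : S → S → S)
    (left_invertive : ∀ a b c : S, mul (mul a b) c = mul (mul c b) a)
    (comm : ∀ x y : S, mul x y = mul y x) :
    ∀ a b c : S, mul (mul a b) c = mul a (mul b c) := by
  intro a b c
  rw [left_invertive, comm (mul c b) a, comm c b]

/-- A Stein AG-groupoid that is an AG-3-band is a semigroup. -/
theorem stein_AG3band_is_semigroup {S : Type*} (mul : S → S → S)
    (left_invertive : ∀ a b c : S, mul (mul a b) c = mul (mul c b) a)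
    (stein : ∀ a b c : S, mul a (mul b c) = mul (mul b c) a)
    (band3 : ∀ a : S, mul a (mul a a) = a) :
    ∀ a b c : S, mul (mul a b) c = mul a (mul b c) :=
  assoc_of_left_invertive_of_comm mul left_invertive <|
    mul_comm_of_stein_of_forall_exists_mul_eq mul stein fun c => ⟨c, mul c c, band3 c⟩
end

section
/- If a Stein AG-groupoid S is a T_f^4-AG-groupoid, i.e., for all a,b,c,d in S, a·b = c·d implies a·d = c·b, then S is a semigroup: the operation · is associative. -/
/-!
In a Stein T_f^4-AG-groupoid, applying the T_f^4 law to the Stein identity `x(yy) = (yy)x` shows that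
all squares coincide, and applying it to suitable instances of the left invertive law shows
`(yx)(xx) = xy`. Together these give commutativity, and a commutative AG-groupoid is a semigroup:
`(ab)c = (cb)a = a(cb) = a(bc)`.
-/

section AGGroupoid

variable {S : Type*} {mul : S → S → S}

local infixl:70 " ⋆ " => mul

theorem mul_self_eq_mul_self (stein : ∀ a b c : S, a ⋆ (b ⋆ c) = (b ⋆ c) ⋆ a)
    (tf4 : ∀ a b c d : S, a ⋆ b = c ⋆ d → a ⋆ d = c ⋆ b) (x y : S) : x ⋆ x = y ⋆ y :=
  (tf4 _ _ _ _ (stein x y y)).trans (tf4 _ _ _ _ (stein y y y)).symm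

theorem mul_mul_left_eq_mul_self_mul
    (left_invertive : ∀ a b c : S, (a ⋆ b) ⋆ c = (c ⋆ b) ⋆ a)
    (tf4 : ∀ a b c d : S, a ⋆ b = c ⋆ d → a ⋆ d = c ⋆ b) (x y : S) :
    (x ⋆ y) ⋆ x = (y ⋆ y) ⋆ y :=
  tf4 _ _ _ _ (left_invertive x y y)

theorem mul_mul_mul_self (left_invertive : ∀ a b c : S, (a ⋆ b) ⋆ c = (c ⋆ b) ⋆ a)
    (stein : ∀ a b c : S, a ⋆ (b ⋆ c) = (b ⋆ c) ⋆ a)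
    (tf4 : ∀ a b c d : S, a ⋆ b = c ⋆ d → a ⋆ d = c ⋆ b) (x y : S) :
    (y ⋆ x) ⋆ (x ⋆ x) = x ⋆ y := by
  have h : (y ⋆ x) ⋆ y = x ⋆ (x ⋆ x) :=
    (mul_mul_left_eq_mul_self_mul left_invertive tf4 y x).trans (stein x x x).symm
  exact tf4 _ _ _ _ h

theorem mul_mul_mul_swap_eq_mul_self_mul_self
    (left_invertive : ∀ a b c : S, (a ⋆ b) ⋆ c = (c ⋆ b) ⋆ a)
    (tf4 : ∀ a b c d : S, a ⋆ b = c ⋆ d → a ⋆ d = c ⋆ b) (x y : S) :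
    (y ⋆ x) ⋆ (x ⋆ y) = (y ⋆ y) ⋆ (y ⋆ y) :=
  calc (y ⋆ x) ⋆ (x ⋆ y) = ((x ⋆ y) ⋆ x) ⋆ y := left_invertive _ _ _
    _ = ((y ⋆ y) ⋆ y) ⋆ y := by rw [mul_mul_left_eq_mul_self_mul left_invertive tf4]
    _ = (y ⋆ y) ⋆ (y ⋆ y) := left_invertive _ _ _

theorem mul_comm_of_stein_of_tf4 (left_invertive : ∀ a b c : S, (a ⋆ b) ⋆ c = (c ⋆ b) ⋆ a)
    (stein : ∀ a b c : S, a ⋆ (b ⋆ c) = (b ⋆ c) ⋆ a)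
    (tf4 : ∀ a b c d : S, a ⋆ b = c ⋆ d → a ⋆ d = c ⋆ b) (x y : S) : x ⋆ y = y ⋆ x :=
  calc x ⋆ y = (y ⋆ x) ⋆ (x ⋆ x) := (mul_mul_mul_self left_invertive stein tf4 x y).symm
    _ = (y ⋆ x) ⋆ (y ⋆ y) := by rw [mul_self_eq_mul_self stein tf4 x y]
    _ = (y ⋆ y) ⋆ (x ⋆ y) :=
      tf4 _ _ _ _ (mul_mul_mul_swap_eq_mul_self_mul_self left_invertive tf4 x y)
    _ = (x ⋆ y) ⋆ (y ⋆ y) := stein _ _ _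
    _ = y ⋆ x := mul_mul_mul_self left_invertive stein tf4 y x

theorem mul_assoc_of_left_invertive_of_comm
    (left_invertive : ∀ a b c : S, (a ⋆ b) ⋆ c = (c ⋆ b) ⋆ a) (comm : ∀ x y : S, x ⋆ y = y ⋆ x)
    (a b c : S) : (a ⋆ b) ⋆ c = a ⋆ (b ⋆ c) := by
  rw [left_invertive, comm, comm c]

end AGGroupoid

/-- A Stein AG-groupoid that is a T_f^4-AG-groupoid is a semigroup. -/
theorem stein_Tf4_is_semigroup {S : Type*} (mul : S → S → S)
    (left_invertive : ∀ a b c : S, mul (mul a b) c = mul (mul c b) a)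
    (stein : ∀ a b c : S, mul a (mul b c) = mul (mul b c) a)
    (tf4 : ∀ a b c d : S, mul a b = mul c d → mul a d = mul c b) :
    ∀ a b c : S, mul (mul a b) c = mul a (mul b c) :=
  mul_assoc_of_left_invertive_of_comm left_invertive
    (mul_comm_of_stein_of_tf4 left_invertive stein tf4)
end

section
/- Let S be a Stein AG-groupoid and L a left ideal of S (i.e., SL ⊆ L). Then L² = LL is a two-sided ideal of S, i.e., S(L²) ⊆ L² and (L²)S ⊆ L². -/
open Set

section AGGroupoid

variable {S : Type*} (mul : S → S → S)

theorem image2_image2_univ_subset_of_left_invertive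
    (left_invertive : ∀ a b c : S, mul (mul a b) c = mul (mul c b) a)
    {A B : Set S} (hB : image2 mul univ B ⊆ B) :
    image2 mul (image2 mul A B) univ ⊆ image2 mul B A := by
  rintro _ ⟨_, ⟨a, ha, b, hb, rfl⟩, s, -, rfl⟩
  rw [left_invertive]
  exact mem_image2_of_mem (hB (mem_image2_of_mem (mem_univ s) hb)) ha

theorem univ_image2_image2_subset_of_stein
    (stein : ∀ a b c : S, mul a (mul b c) = mul (mul b c) a) (A B : Set S) :
    image2 mul univ (image2 mul A B) ⊆ image2 mul (image2 mul A B) univ := by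
  rintro _ ⟨s, -, _, ⟨a, ha, b, hb, rfl⟩, rfl⟩
  rw [stein]
  exact mem_image2_of_mem (mem_image2_of_mem ha hb) (mem_univ s)

end AGGroupoid

/-- In a Stein AG-groupoid, if L is a left ideal then L² is a two-sided ideal. -/
theorem stein_left_ideal_square_is_ideal {S : Type*} (mul : S → S → S)
    (left_invertive : ∀ a b c : S, mul (mul a b) c = mul (mul c b) a)
    (stein : ∀ a b c : S, mul a (mul b c) = mul (mul b c) a)
    (L : Set S) (hL : Set.image2 mul Set.univ L ⊆ L) :
    Set.image2 mul Set.univ (Set.image2 mul L L) ⊆ Set.image2 mul L L ∧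
    Set.image2 mul (Set.image2 mul L L) Set.univ ⊆ Set.image2 mul L L := by
  have right_ideal := image2_image2_univ_subset_of_left_invertive mul left_invertive (A := L) hL
  exact ⟨(univ_image2_image2_subset_of_stein mul stein L L).trans right_ideal, right_ideal⟩
end

section
/- Let S be a Stein AG-groupoid and a a fixed element of S. Then the set aS = {a·x : x ∈ S} is a two-sided ideal of S, i.e., S(aS) ⊆ aS and (aS)S ⊆ aS. Moreover, for any fixed a in S, the set (aS)a = {(a·x)·a : x ∈ S} is also a two-sided ideal of S. -/
/-!
Two identities carry the whole argument: in a Stein AG-groupoid `s (a x) = a (s x)` and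
`(a x) s = a (s x)`, so multiplying `a x` on either side by `s` gives `a (s x) ∈ aS`.
Since `(a x) a = a (a x)` by the Stein law, `(aS)a = a(aS)`, and applying the two identities
twice shows that products with `a (a x)` on either side stay of the form `a (a y)`.
-/

namespace AGGroupoid

variable {S : Type*} (mul : S → S → S)

def IsLeftInvertive : Prop := ∀ a b c : S, mul (mul a b) c = mul (mul c b) a

def IsStein : Prop := ∀ a b c : S, mul a (mul b c) = mul (mul b c) a

def IsIdeal (A : Set S) : Prop :=
  Set.image2 mul Set.univ A ⊆ A ∧ Set.image2 mul A Set.univ ⊆ A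

variable {mul}

theorem mul_right_eq_mul_mul (hl : IsLeftInvertive mul) (hs : IsStein mul) (a x s : S) :
    mul (mul a x) s = mul a (mul s x) := by
  rw [hl a x s, hs a s x]

theorem mul_left_comm (hl : IsLeftInvertive mul) (hs : IsStein mul) (s a x : S) :
    mul s (mul a x) = mul a (mul s x) := by
  rw [hs s a x, mul_right_eq_mul_mul hl hs]

theorem isIdeal_mul_left (hl : IsLeftInvertive mul) (hs : IsStein mul) (a : S) :
    IsIdeal mul {z : S | ∃ x : S, z = mul a x} := by
  constructor
  · rintro _ ⟨s, -, _, ⟨x, rfl⟩, rfl⟩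
    exact ⟨mul s x, mul_left_comm hl hs s a x⟩
  · rintro _ ⟨_, ⟨x, rfl⟩, s, -, rfl⟩
    exact ⟨mul s x, mul_right_eq_mul_mul hl hs a x s⟩

theorem isIdeal_mul_left_mul_right (hl : IsLeftInvertive mul) (hs : IsStein mul) (a : S) :
    IsIdeal mul {z : S | ∃ x : S, z = mul (mul a x) a} := by
  have hswap : ∀ x, mul (mul a x) a = mul a (mul a x) := fun x => (hs a a x).symm
  constructor
  · rintro _ ⟨s, -, _, ⟨x, rfl⟩, rfl⟩
    refine ⟨mul s x, ?_⟩
    rw [hswap, hswap, mul_left_comm hl hs s a, mul_left_comm hl hs s a x]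
  · rintro _ ⟨_, ⟨x, rfl⟩, s, -, rfl⟩
    refine ⟨mul s x, ?_⟩
    rw [hswap, hswap, mul_right_eq_mul_mul hl hs a _ s, mul_left_comm hl hs s a x]

end AGGroupoid

open AGGroupoid in
/-- In a Stein AG-groupoid, for any fixed a, the sets aS and (aS)a are
two-sided ideals. -/
theorem stein_aS_and_aSa_ideals {S : Type*} (mul : S → S → S)
    (left_invertive : ∀ a b c : S, mul (mul a b) c = mul (mul c b) a)
    (stein : ∀ a b c : S, mul a (mul b c) = mul (mul b c) a)
    (a : S) :
    (Set.image2 mul Set.univ {z : S | ∃ x : S, z = mul a x} ⊆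
      {z : S | ∃ x : S, z = mul a x} ∧
     Set.image2 mul {z : S | ∃ x : S, z = mul a x} Set.univ ⊆
      {z : S | ∃ x : S, z = mul a x}) ∧
    (Set.image2 mul Set.univ {z : S | ∃ x : S, z = mul (mul a x) a} ⊆
      {z : S | ∃ x : S, z = mul (mul a x) a} ∧
     Set.image2 mul {z : S | ∃ x : S, z = mul (mul a x) a} Set.univ ⊆
      {z : S | ∃ x : S, z = mul (mul a x) a}) :=
  ⟨isIdeal_mul_left left_invertive stein a, isIdeal_mul_left_mul_right left_invertive stein a⟩
end

section
/- Let S be a Stein AG-groupoid and a a fixed element of S. Then the set a(Sa) = {a·(x·a) : x ∈ S} is a two-sided ideal of S, and it is minimal among ideals containing a: if L is any two-sided ideal of S with a ∈ L, then a(Sa) ⊆ L. -/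
/-! Every product with an element `a(xa)` on either side is again of the form `a(ya)`, with
`y = sx`: by the Stein law `a(xa) = (xa)a`, and the left invertive and medial laws move `s`
inside, `((xa)a)s = (sa)(xa) = (sx)(aa) = ((sx)a)a = a((sx)a)`. Minimality is immediate,
since `a(xa) ∈ S(S L) ⊆ L` as soon as `a ∈ L`. -/

section AGGroupoid

variable {S : Type*} {mul : S → S → S}

theorem medial_of_left_invertive_s18
    (left_invertive : ∀ a b c : S, mul (mul a b) c = mul (mul c b) a) (p q r t : S) :
    mul (mul p q) (mul r t) = mul (mul p r) (mul q t) := by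
  rw [left_invertive p q (mul r t), left_invertive r t q, left_invertive (mul q t) r p]

variable (left_invertive : ∀ a b c : S, mul (mul a b) c = mul (mul c b) a)
  (stein : ∀ a b c : S, mul a (mul b c) = mul (mul b c) a)
include left_invertive stein

theorem stein_mul_right_eq (a x s : S) :
    mul (mul a (mul x a)) s = mul a (mul (mul s x) a) :=
  calc mul (mul a (mul x a)) s
      = mul (mul (mul x a) a) s := by rw [stein a x a]
    _ = mul (mul s a) (mul x a) := left_invertive (mul x a) a s
    _ = mul (mul s x) (mul a a) := medial_of_left_invertive_s18 left_invertive s a x a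
    _ = mul (mul a a) (mul s x) := stein (mul s x) a a
    _ = mul (mul (mul s x) a) a := left_invertive a a (mul s x)
    _ = mul a (mul (mul s x) a) := (stein a (mul s x) a).symm

theorem stein_mul_left_eq (a x s : S) :
    mul s (mul a (mul x a)) = mul a (mul (mul s x) a) := by
  rw [stein s a (mul x a), stein_mul_right_eq left_invertive stein]

end AGGroupoid

/-- In a Stein AG-groupoid, for any fixed a, the set a(Sa) is a two-sided
ideal, minimal among the ideals containing a. -/
theorem stein_aSa_minimal_ideal {S : Type*} (mul : S → S → S)
    (left_invertive : ∀ a b c : S, mul (mul a b) c = mul (mul c b) a)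
    (stein : ∀ a b c : S, mul a (mul b c) = mul (mul b c) a)
    (a : S) :
    (Set.image2 mul Set.univ {z : S | ∃ x : S, z = mul a (mul x a)} ⊆
      {z : S | ∃ x : S, z = mul a (mul x a)} ∧
     Set.image2 mul {z : S | ∃ x : S, z = mul a (mul x a)} Set.univ ⊆
      {z : S | ∃ x : S, z = mul a (mul x a)}) ∧
    (∀ L : Set S, Set.image2 mul Set.univ L ⊆ L →
      Set.image2 mul L Set.univ ⊆ L → a ∈ L →
      {z : S | ∃ x : S, z = mul a (mul x a)} ⊆ L) := by
  refine ⟨⟨?_, ?_⟩, ?_⟩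
  · rintro _ ⟨s, -, _, ⟨x, rfl⟩, rfl⟩
    exact ⟨mul s x, stein_mul_left_eq left_invertive stein a x s⟩
  · rintro _ ⟨_, ⟨x, rfl⟩, s, -, rfl⟩
    exact ⟨mul s x, stein_mul_right_eq left_invertive stein a x s⟩
  · rintro L hL - haL _ ⟨x, rfl⟩
    exact hL ⟨a, trivial, mul x a, hL ⟨x, trivial, a, haL, rfl⟩, rfl⟩
end

section
/- Let S be a Stein AG-groupoid, L a left ideal of S, R a right ideal of S, and let x, y be elements of S with x = x·x and y = y·y. Then (i) xL = L ∩ xS, (ii) Rx = Sx ∩ R, and (iii) x(Sy) = Sy ∩ xS, where xL = {x·l : l ∈ L}, xS = {x·s : s ∈ S}, Rx = {r·x : r ∈ R}, Sx = {s·x : s ∈ S}, Sy = {s·y : s ∈ S}, and x(Sy) = {x·(s·y) : s ∈ S}. -/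
/-! In a Stein AG-groupoid an idempotent `e` commutes with everything, since
`s e = s (e e) = (e e) s = e s`. Together with the left invertive law this makes `e` act as a
left identity on `eS` and a right identity on `Se`, so every element of `L ∩ xS` (resp. `Sx ∩ R`)
is `x` times (resp. times `x`) itself; and `x (s y) = (s x) y` moves `x(Sy)` into `Sy`. -/

section SteinAGGroupoid

variable {S : Type*} {mul : S → S → S}

theorem mul_comm_of_idempotent (stein : ∀ a b c : S, mul a (mul b c) = mul (mul b c) a)
    {e : S} (he : e = mul e e) (s : S) : mul s e = mul e s := by
  rw [he, stein, ← he]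

theorem mul_idempotent_mul_idempotent_left
    (left_invertive : ∀ a b c : S, mul (mul a b) c = mul (mul c b) a)
    (stein : ∀ a b c : S, mul a (mul b c) = mul (mul b c) a)
    {e : S} (he : e = mul e e) (s : S) : mul e (mul e s) = mul e s :=
  calc mul e (mul e s) = mul (mul s e) e := by
        rw [stein, ← mul_comm_of_idempotent stein he]
    _ = mul e s := by rw [left_invertive, ← he]

theorem mul_mul_idempotent_idempotent_right
    (left_invertive : ∀ a b c : S, mul (mul a b) c = mul (mul c b) a)
    (stein : ∀ a b c : S, mul a (mul b c) = mul (mul b c) a)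
    {e : S} (he : e = mul e e) (s : S) : mul (mul s e) e = mul s e := by
  rw [left_invertive, ← he, mul_comm_of_idempotent stein he]

theorem mul_mul_idempotent_right_swap
    (left_invertive : ∀ a b c : S, mul (mul a b) c = mul (mul c b) a)
    (stein : ∀ a b c : S, mul a (mul b c) = mul (mul b c) a)
    {e : S} (he : e = mul e e) (x s : S) : mul x (mul s e) = mul (mul s x) e :=
  calc mul x (mul s e) = mul (mul x e) s := by rw [stein, left_invertive]
    _ = mul (mul s x) e := by rw [mul_comm_of_idempotent stein he x, left_invertive]

theorem setOf_mul_left_mem_eq_inter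
    (left_invertive : ∀ a b c : S, mul (mul a b) c = mul (mul c b) a)
    (stein : ∀ a b c : S, mul a (mul b c) = mul (mul b c) a)
    {L : Set S} (hL : Set.image2 mul Set.univ L ⊆ L) {x : S} (hx : x = mul x x) :
    {z : S | ∃ l ∈ L, z = mul x l} = L ∩ {z : S | ∃ s : S, z = mul x s} := by
  ext z
  constructor
  · rintro ⟨l, hl, rfl⟩
    exact ⟨hL (Set.mem_image2_of_mem (Set.mem_univ x) hl), l, rfl⟩
  · rintro ⟨hzL, s, rfl⟩
    exact ⟨mul x s, hzL, (mul_idempotent_mul_idempotent_left left_invertive stein hx s).symm⟩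

theorem setOf_mul_right_mem_eq_inter
    (left_invertive : ∀ a b c : S, mul (mul a b) c = mul (mul c b) a)
    (stein : ∀ a b c : S, mul a (mul b c) = mul (mul b c) a)
    {R : Set S} (hR : Set.image2 mul R Set.univ ⊆ R) {x : S} (hx : x = mul x x) :
    {z : S | ∃ r ∈ R, z = mul r x} = {z : S | ∃ s : S, z = mul s x} ∩ R := by
  ext z
  constructor
  · rintro ⟨r, hr, rfl⟩
    exact ⟨⟨r, rfl⟩, hR (Set.mem_image2_of_mem hr (Set.mem_univ x))⟩
  · rintro ⟨⟨s, rfl⟩, hzR⟩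
    exact ⟨mul s x, hzR, (mul_mul_idempotent_idempotent_right left_invertive stein hx s).symm⟩

theorem setOf_mul_mul_right_eq_inter
    (left_invertive : ∀ a b c : S, mul (mul a b) c = mul (mul c b) a)
    (stein : ∀ a b c : S, mul a (mul b c) = mul (mul b c) a)
    {x y : S} (hx : x = mul x x) (hy : y = mul y y) :
    {z : S | ∃ s : S, z = mul x (mul s y)} =
      {z : S | ∃ s : S, z = mul s y} ∩ {z : S | ∃ s : S, z = mul x s} := by
  ext z
  constructor
  · rintro ⟨s, rfl⟩
    exact ⟨⟨mul s x, mul_mul_idempotent_right_swap left_invertive stein hy x s⟩, mul s y, rfl⟩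
  · rintro ⟨⟨s, hs⟩, t, rfl⟩
    exact ⟨s, by rw [← hs, mul_idempotent_mul_idempotent_left left_invertive stein hx]⟩

end SteinAGGroupoid

/-- In a Stein AG-groupoid, for a left ideal L, a right ideal R, and
idempotent-like elements x = x·x, y = y·y:
(i) xL = L ∩ xS, (ii) Rx = Sx ∩ R, (iii) x(Sy) = Sy ∩ xS. -/
theorem stein_ideal_intersections {S : Type*} (mul : S → S → S)
    (left_invertive : ∀ a b c : S, mul (mul a b) c = mul (mul c b) a)
    (stein : ∀ a b c : S, mul a (mul b c) = mul (mul b c) a)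
    (L R : Set S)
    (hL : Set.image2 mul Set.univ L ⊆ L)
    (hR : Set.image2 mul R Set.univ ⊆ R)
    (x y : S) (hx : x = mul x x) (hy : y = mul y y) :
    {z : S | ∃ l ∈ L, z = mul x l} =
      L ∩ {z : S | ∃ s : S, z = mul x s} ∧
    {z : S | ∃ r ∈ R, z = mul r x} =
      {z : S | ∃ s : S, z = mul s x} ∩ R ∧
    {z : S | ∃ s : S, z = mul x (mul s y)} =
      {z : S | ∃ s : S, z = mul s y} ∩ {z : S | ∃ s : S, z = mul x s} :=
  ⟨setOf_mul_left_mem_eq_inter left_invertive stein hL hx,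
    setOf_mul_right_mem_eq_inter left_invertive stein hR hx,
    setOf_mul_mul_right_eq_inter left_invertive stein hx hy⟩
end
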